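/- arXiv:2605.14423 — 2 statements merged into one kernel-verified Lean document; each statement's English description precedes it below -/
import Mathlib

section
/- For a d×r matrix Q with ‖Q‖_F ≤ 1/2 (Frobenius norm), if B̄ = B + Q where B is a d×r matrix with orthonormal columns and Bᵀ Q = 0, and B̄ = B' R is the QR decomposition of B̄ with R upper triangular r×r, then ‖R - I‖ ≤ 2‖Q‖_F². -/
open Matrix

noncomputable def frobNorm {m n : ℕ} (M : Matrix (Fin m) (Fin n) ℝ) : ℝ :=
  Real.sqrt (∑ i, ∑ j, (M i j) ^ 2)

noncomputable def opNorm {m n : ℕ} (M : Matrix (Fin m) (Fin n) ℝ) : ℝ :=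
  ‖LinearMap.toContinuousLinearMap (Matrix.toEuclideanLin M)‖

namespace QRaux

lemma frobNorm_nonneg {m n : ℕ} (M : Matrix (Fin m) (Fin n) ℝ) : 0 ≤ frobNorm M :=
  Real.sqrt_nonneg _

lemma frobNorm_mono {m n : ℕ} (S T : Matrix (Fin m) (Fin n) ℝ)
    (h : ∀ i j, (S i j)^2 ≤ (T i j)^2) : frobNorm S ≤ frobNorm T :=
  Real.sqrt_le_sqrt (Finset.sum_le_sum fun i _ => Finset.sum_le_sum fun j _ => h i j)

lemma sum_sq_eq_dot {n : ℕ} (w : Fin n → ℝ) : ∑ i, (w i)^2 = w ⬝ᵥ w := by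
  simp [dotProduct, sq]

lemma dot_self_nonneg {n : ℕ} (w : Fin n → ℝ) : 0 ≤ w ⬝ᵥ w := by
  rw [← sum_sq_eq_dot]; positivity

lemma dot_mul_self {a b : ℕ} (M : Matrix (Fin a) (Fin b) ℝ) (z : Fin b → ℝ) :
    (M.mulVec z) ⬝ᵥ (M.mulVec z) = z ⬝ᵥ ((Mᵀ * M).mulVec z) := by
  rw [← Matrix.mulVec_mulVec, Matrix.dotProduct_mulVec z, Matrix.vecMul_transpose]

lemma mulVec_sq_le {m n : ℕ} (M : Matrix (Fin m) (Fin n) ℝ) (x : Fin n → ℝ) :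
    ∑ i, (M.mulVec x i)^2 ≤ (∑ i, ∑ j, (M i j)^2) * (∑ j, (x j)^2) := by
  rw [Finset.sum_mul]
  refine Finset.sum_le_sum fun i _ => ?_
  simpa [Matrix.mulVec, dotProduct] using
    Finset.sum_mul_sq_le_sq_mul_sq Finset.univ (fun j => M i j) (fun j => x j)

lemma opNorm_le_frobNorm {m n : ℕ} (M : Matrix (Fin m) (Fin n) ℝ) : opNorm M ≤ frobNorm M := by
  refine ContinuousLinearMap.opNorm_le_bound _ (frobNorm_nonneg M) fun x => ?_
  have hx : ‖x‖ = Real.sqrt (∑ j, (x j)^2) := by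
    rw [EuclideanSpace.norm_eq]
    congr 1
    exact Finset.sum_congr rfl fun j _ => by rw [Real.norm_eq_abs, sq_abs]
  have hMx : ‖(LinearMap.toContinuousLinearMap (Matrix.toEuclideanLin M)) x‖
      = Real.sqrt (∑ i, (M.mulVec x i)^2) := by
    rw [EuclideanSpace.norm_eq]
    congr 1
    refine Finset.sum_congr rfl fun i _ => ?_
    rw [Real.norm_eq_abs, sq_abs]
    rfl
  rw [hMx, hx, frobNorm, ← Real.sqrt_mul (by positivity)]
  exact Real.sqrt_le_sqrt (mulVec_sq_le M x)

lemma frobNorm_mul_le {a b c : ℕ} (A : Matrix (Fin a) (Fin b) ℝ) (B : Matrix (Fin b) (Fin c) ℝ) :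
    frobNorm (A * B) ≤ frobNorm A * frobNorm B := by
  rw [frobNorm, frobNorm, frobNorm, ← Real.sqrt_mul (by positivity)]
  refine Real.sqrt_le_sqrt ?_
  calc ∑ i, ∑ j, ((A * B) i j)^2
      ≤ ∑ i, ∑ j, (∑ k, (A i k)^2) * (∑ k, (B k j)^2) := by
        refine Finset.sum_le_sum fun i _ => Finset.sum_le_sum fun j _ => ?_
        simpa [Matrix.mul_apply] using
          Finset.sum_mul_sq_le_sq_mul_sq Finset.univ (fun k => A i k) (fun k => B k j)
    _ = (∑ i, ∑ k, (A i k)^2) * (∑ k, ∑ j, (B k j)^2) := by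
        rw [Finset.sum_comm (s := Finset.univ) (t := Finset.univ)
          (f := fun k j => (B k j)^2), Finset.sum_mul_sum]

lemma frobNorm_transpose {a b : ℕ} (A : Matrix (Fin a) (Fin b) ℝ) :
    frobNorm Aᵀ = frobNorm A := by
  rw [frobNorm, frobNorm, Finset.sum_comm]
  rfl

lemma frob_mul_le_of_contract {n : ℕ} (A M : Matrix (Fin n) (Fin n) ℝ)
    (h : ∀ x : Fin n → ℝ, ∑ i, (A.mulVec x i)^2 ≤ ∑ i, (x i)^2) :
    frobNorm (A * M) ≤ frobNorm M := by
  refine Real.sqrt_le_sqrt ?_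
  rw [Finset.sum_comm, Finset.sum_comm (f := fun i j => (M i j)^2)]
  refine Finset.sum_le_sum fun j _ => ?_
  simpa [Matrix.mul_apply, Matrix.mulVec, dotProduct] using h (fun k => M k j)

lemma inv_contract {n d' : ℕ} (R : Matrix (Fin n) (Fin n) ℝ) (Q : Matrix (Fin d') (Fin n) ℝ)
    (hA : Rᵀ * R = 1 + Qᵀ * Q) (hRu : IsUnit R.det) (x : Fin n → ℝ) :
    ∑ i, ((Rᵀ)⁻¹.mulVec x i)^2 ≤ ∑ i, (x i)^2 := by
  have hRT : IsUnit Rᵀ.det := by rwa [Matrix.det_transpose]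
  set v := (Rᵀ)⁻¹.mulVec x with hv
  set z := R⁻¹.mulVec v with hz
  have hvz : R.mulVec z = v := by
    rw [hz, Matrix.mulVec_mulVec, Matrix.mul_nonsing_inv R hRu, Matrix.one_mulVec]
  have hx : x = Rᵀ.mulVec v := by
    rw [hv, Matrix.mulVec_mulVec, Matrix.mul_nonsing_inv Rᵀ hRT, Matrix.one_mulVec]
  have hxz : x = z + (Qᵀ * Q).mulVec z := by
    rw [hx, ← hvz, Matrix.mulVec_mulVec, hA, Matrix.add_mulVec, Matrix.one_mulVec]
  have h1 : v ⬝ᵥ v = z ⬝ᵥ z + z ⬝ᵥ (Qᵀ * Q).mulVec z := by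
    rw [← hvz, dot_mul_self, hA, Matrix.add_mulVec, Matrix.one_mulVec, dotProduct_add]
  have hQz : z ⬝ᵥ (Qᵀ * Q).mulVec z = (Q.mulVec z) ⬝ᵥ (Q.mulVec z) := (dot_mul_self Q z).symm
  have h2 : x ⬝ᵥ x = z ⬝ᵥ z + 2 * (z ⬝ᵥ (Qᵀ * Q).mulVec z)
      + ((Qᵀ * Q).mulVec z) ⬝ᵥ ((Qᵀ * Q).mulVec z) := by
    rw [hxz, add_dotProduct, dotProduct_add, dotProduct_add,
      dotProduct_comm ((Qᵀ * Q).mulVec z) z]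
    ring
  rw [sum_sq_eq_dot, sum_sq_eq_dot, h1, h2, hQz]
  have g1 := dot_self_nonneg (Q.mulVec z)
  have g2 := dot_self_nonneg ((Qᵀ * Q).mulVec z)
  linarith

lemma inv_transpose_tri {n : ℕ} (R : Matrix (Fin n) (Fin n) ℝ) (hRtri : R.BlockTriangular id)
    (hRu : IsUnit R.det) : ∀ i j : Fin n, i < j → (Rᵀ)⁻¹ i j = 0 := by
  have hRT : IsUnit Rᵀ.det := by rwa [Matrix.det_transpose]
  have : Invertible Rᵀ := Rᵀ.invertibleOfIsUnitDet hRT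
  have h := Matrix.blockTriangular_inv_of_blockTriangular hRtri.transpose
  intro i j hij
  exact h (show (OrderDual.toDual ∘ id) j < (OrderDual.toDual ∘ id) i from hij)

lemma inv_transpose_diag {n : ℕ} (R : Matrix (Fin n) (Fin n) ℝ) (hRtri : R.BlockTriangular id)
    (hRu : IsUnit R.det) (i : Fin n) : (Rᵀ)⁻¹ i i = (R i i)⁻¹ := by
  have hRT : IsUnit Rᵀ.det := by rwa [Matrix.det_transpose]
  have h1 : (Rᵀ * (Rᵀ)⁻¹) i i = 1 := by
    rw [Matrix.mul_nonsing_inv _ hRT, Matrix.one_apply_eq]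
  rw [Matrix.mul_apply] at h1
  have h2 : ∑ k, Rᵀ i k * (Rᵀ)⁻¹ k i = R i i * (Rᵀ)⁻¹ i i := by
    refine Finset.sum_eq_single i (fun k _ hk => ?_) (fun h => absurd (Finset.mem_univ i) h)
    rcases lt_or_gt_of_ne hk with h | h
    · rw [inv_transpose_tri R hRtri hRu k i h, mul_zero]
    · rw [Matrix.transpose_apply, hRtri (show id i < id k from h), zero_mul]
  rw [h2] at h1
  exact (inv_eq_of_mul_eq_one_right h1).symm

lemma diag_ineq (t : ℝ) (ht : 0 < t) : (t - 1)^2 ≤ (t - t⁻¹)^2 := by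
  have h : t - t⁻¹ = (t^2 - 1) / t := by field_simp
  rw [h, div_pow, le_div_iff₀ (by positivity)]
  nlinarith [mul_nonneg (sq_nonneg (t - 1)) (by linarith : (0:ℝ) ≤ 2*t + 1)]

end QRaux

open QRaux

/-- If `B̄ = B + Q` with `B` orthonormal-columned, `BᵀQ = 0`,
`‖Q‖_F ≤ 1/2`, and `B̄ = B' R` is the QR decomposition (`B'` with orthonormal
columns, `R` invertible upper triangular with positive diagonal), then
`‖R − I‖ ≤ 2‖Q‖_F²`. -/
theorem qr_perturbation (d r : ℕ) (B Q Bbar B' : Matrix (Fin d) (Fin r) ℝ)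
    (R : Matrix (Fin r) (Fin r) ℝ)
    (hB : Bᵀ * B = 1) (hBQ : Bᵀ * Q = 0) (hQ : frobNorm Q ≤ 1 / 2)
    (hBbar : Bbar = B + Q)
    (hB' : B'ᵀ * B' = 1) (hRtri : R.BlockTriangular id)
    (hRdiag : ∀ i, 0 < R i i) (hRu : IsUnit R.det)
    (hQR : Bbar = B' * R) :
    opNorm (R - 1) ≤ 2 * (frobNorm Q) ^ 2 := by
  have hRT : IsUnit Rᵀ.det := by rwa [Matrix.det_transpose]
  have hQB : Qᵀ * B = 0 := by
    have := congrArg Matrix.transpose hBQ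
    simpa [Matrix.transpose_mul] using this
  have hA : Rᵀ * R = 1 + Qᵀ * Q := by
    have h1 : Rᵀ * R = (B + Q)ᵀ * (B + Q) := by
      calc Rᵀ * R = Rᵀ * (B'ᵀ * B') * R := by rw [hB', mul_one]
        _ = (B' * R)ᵀ * (B' * R) := by
            rw [Matrix.transpose_mul]; simp only [Matrix.mul_assoc]
        _ = (B + Q)ᵀ * (B + Q) := by rw [← hQR, hBbar]
    rw [h1, Matrix.transpose_add, Matrix.add_mul, Matrix.mul_add, Matrix.mul_add,
      hB, hBQ, hQB]
    simp
  set N := (Rᵀ)⁻¹ with hN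
  have hid : R - N = N * (Qᵀ * Q) := by
    have hNR : N * (Rᵀ * R) = R := by
      rw [← Matrix.mul_assoc, Matrix.nonsing_inv_mul _ hRT, Matrix.one_mul]
    calc R - N = N * (Rᵀ * R) - N * 1 := by rw [hNR, mul_one]
      _ = N * (Rᵀ * R - 1) := by rw [Matrix.mul_sub]
      _ = N * (Qᵀ * Q) := by rw [hA]; congr 1; abel
  have step1 : opNorm (R - 1) ≤ frobNorm (R - 1) := opNorm_le_frobNorm _
  have step2 : frobNorm (R - 1) ≤ frobNorm (R - N) := by
    refine frobNorm_mono _ _ fun i j => ?_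
    rw [hN]
    rcases lt_trichotomy i j with h | h | h
    · rw [Matrix.sub_apply, Matrix.sub_apply, inv_transpose_tri R hRtri hRu i j h,
        Matrix.one_apply_ne (Fin.ne_of_lt h)]
    · subst h
      rw [Matrix.sub_apply, Matrix.sub_apply, inv_transpose_diag R hRtri hRu i,
        Matrix.one_apply_eq]
      exact diag_ineq (R i i) (hRdiag i)
    · rw [Matrix.sub_apply, Matrix.sub_apply, hRtri (show id j < id i from h),
        Matrix.one_apply_ne (Fin.ne_of_gt h)]
      simpa using sq_nonneg (0 - N i j)
  have step3 : frobNorm (R - N) ≤ frobNorm (Qᵀ * Q) := by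
    rw [hid]
    exact frob_mul_le_of_contract N _ (inv_contract R Q hA hRu)
  have step4 : frobNorm (Qᵀ * Q) ≤ frobNorm Q ^ 2 := by
    calc frobNorm (Qᵀ * Q) ≤ frobNorm Qᵀ * frobNorm Q := frobNorm_mul_le _ _
      _ = frobNorm Q ^ 2 := by rw [frobNorm_transpose]; ring
  have hq2 : (0:ℝ) ≤ frobNorm Q ^ 2 := by positivity
  linarith
end

section
/- Let B and B* be d×r real matrices with orthonormal columns, and let B*_⊥ be a d×(d−r) matrix whose columns form an orthonormal basis of the orthogonal complement of the column space of B*. Let UΣVᵀ be a singular value decomposition of Bᵀ B* and set 𝓡 = U Vᵀ. Then ‖I − (B𝓡)ᵀ B*‖ ≤ ‖B*_⊥ᵀ B‖², where ‖·‖ denotes operator norm. -/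
open Matrix

open scoped Matrix.Norms.L2Operator

section Aux

lemma opNorm_eq_l2 {m n : ℕ} (M : Matrix (Fin m) (Fin n) ℝ) : opNorm M = ‖M‖ := rfl

lemma my_norm_transpose {m n : ℕ} (M : Matrix (Fin m) (Fin n) ℝ) : ‖Mᵀ‖ = ‖M‖ := by
  rw [← conjTranspose_eq_transpose_of_trivial, Matrix.l2_opNorm_conjTranspose]

lemma my_norm_transpose_mul_self {m n : ℕ} (A : Matrix (Fin m) (Fin n) ℝ) :
    ‖Aᵀ * A‖ = ‖A‖ * ‖A‖ := by
  rw [← conjTranspose_eq_transpose_of_trivial, Matrix.l2_opNorm_conjTranspose_mul_self]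

lemma my_norm_one_le {n : ℕ} : ‖(1 : Matrix (Fin n) (Fin n) ℝ)‖ ≤ 1 := by
  rw [Matrix.cstar_norm_def, _root_.map_one]; exact ContinuousLinearMap.norm_id_le

lemma ortho_norm_le {m n : ℕ} (W : Matrix (Fin m) (Fin n) ℝ) (hW : Wᵀ * W = 1) : ‖W‖ ≤ 1 := by
  have h : ‖W‖ * ‖W‖ ≤ 1 := by rw [← my_norm_transpose_mul_self, hW]; exact my_norm_one_le
  nlinarith [norm_nonneg W]

lemma diag_lower {n : ℕ} (δ : Fin n → ℝ) (i : Fin n) : |δ i| ≤ ‖diagonal δ‖ := by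
  have h := Matrix.l2_opNorm_mulVec (diagonal δ) (EuclideanSpace.single i 1)
  rw [EuclideanSpace.norm_single, norm_one, mul_one] at h
  refine le_trans (le_of_eq ?_) h
  have hx : (diagonal δ) *ᵥ ((EuclideanSpace.single i 1 : EuclideanSpace ℝ (Fin n)) : Fin n → ℝ)
      = Pi.single i (δ i) := by
    have : ((EuclideanSpace.single i 1 : EuclideanSpace ℝ (Fin n)) : Fin n → ℝ)
        = Pi.single i 1 := rfl
    rw [this, diagonal_mulVec_single, mul_one]
  calc |δ i| = ‖(EuclideanSpace.single i (δ i) : EuclideanSpace ℝ (Fin n))‖ := by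
        rw [EuclideanSpace.norm_single]; exact (Real.norm_eq_abs _).symm
    _ = _ := by congr 1; rw [hx]; rfl

lemma diag_upper {n : ℕ} (δ : Fin n → ℝ) (c : ℝ) (hc : 0 ≤ c) (h : ∀ i, |δ i| ≤ c) :
    ‖diagonal δ‖ ≤ c := by
  rw [Matrix.l2_opNorm_def]
  refine ContinuousLinearMap.opNorm_le_bound _ hc (fun x => ?_)
  have hT : (LinearEquiv.trans toEuclideanLin LinearMap.toContinuousLinearMap (diagonal δ)) x
      = (WithLp.equiv 2 (Fin n → ℝ)).symm ((diagonal δ) *ᵥ (WithLp.equiv 2 (Fin n → ℝ)) x) := rfl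
  rw [hT]
  rw [EuclideanSpace.norm_eq, EuclideanSpace.norm_eq]
  have key : ∑ i, ‖(WithLp.equiv 2 (Fin n → ℝ)).symm ((diagonal δ) *ᵥ (WithLp.equiv 2 (Fin n → ℝ)) x) i‖^2
      ≤ c^2 * ∑ i, ‖x i‖^2 := by
    rw [Finset.mul_sum]
    refine Finset.sum_le_sum (fun i _ => ?_)
    have : ((WithLp.equiv 2 (Fin n → ℝ)).symm ((diagonal δ) *ᵥ (WithLp.equiv 2 (Fin n → ℝ)) x)) i
        = δ i * x i := by
      simp [Matrix.mulVec_diagonal]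
    rw [this, Real.norm_eq_abs, Real.norm_eq_abs, sq_abs, sq_abs, mul_pow]
    have h1 : (δ i)^2 ≤ c^2 := by
      nlinarith [h i, abs_nonneg (δ i), le_abs_self (δ i), neg_abs_le (δ i)]
    nlinarith [sq_nonneg (x i)]
  refine le_trans (Real.sqrt_le_sqrt key) (le_of_eq ?_)
  rw [Real.sqrt_mul (sq_nonneg c), Real.sqrt_sq hc]

end Aux

set_option maxHeartbeats 1000000

/-- For `B, B*` with orthonormal columns, `B*_⊥` an orthonormal basis
of the orthogonal complement of `range(B*)`, and `𝓡 = UVᵀ` the Procrustes rotation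
from an SVD `Bᵀ B* = U Σ Vᵀ`, we have `‖I − (B𝓡)ᵀ B*‖ ≤ ‖B*_⊥ᵀ B‖²`. -/
theorem procrustes_alignment_bound (d r : ℕ) (hr : 1 ≤ r) (hdr : r ≤ d)
    (B Bstar : Matrix (Fin d) (Fin r) ℝ)
    (Bperp : Matrix (Fin d) (Fin (d - r)) ℝ)
    (hB : Bᵀ * B = 1) (hBstar : Bstarᵀ * Bstar = 1)
    (hBperp : Bperpᵀ * Bperp = 1) (horth : Bstarᵀ * Bperp = 0)
    (hspan : Bstar * Bstarᵀ + Bperp * Bperpᵀ = 1)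
    (U V : Matrix (Fin r) (Fin r) ℝ) (σ : Fin r → ℝ) (hσ : ∀ i, 0 ≤ σ i)
    (hU : Uᵀ * U = 1) (hV : Vᵀ * V = 1)
    (hSVD : Bᵀ * Bstar = U * Matrix.diagonal σ * Vᵀ) :
    opNorm (1 - (B * (U * Vᵀ))ᵀ * Bstar) ≤ (opNorm (Bperpᵀ * B)) ^ 2 := by
  rw [opNorm_eq_l2, opNorm_eq_l2]
  -- basic square-orthogonality facts
  have hVV : V * Vᵀ = 1 := mul_eq_one_comm.mp hV
  have hUU : U * Uᵀ = 1 := mul_eq_one_comm.mp hU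
  set D1 : Matrix (Fin r) (Fin r) ℝ := diagonal (fun i => 1 - σ i) with hD1def
  set D2 : Matrix (Fin r) (Fin r) ℝ := diagonal (fun i => 1 - σ i * σ i) with hD2def
  -- norms of orthonormal-column matrices
  have nB : ‖B‖ ≤ 1 := ortho_norm_le _ hB
  have nBstar : ‖Bstar‖ ≤ 1 := ortho_norm_le _ hBstar
  have nU : ‖U‖ ≤ 1 := ortho_norm_le _ hU
  have nV : ‖V‖ ≤ 1 := ortho_norm_le _ hV
  have nUT : ‖Uᵀ‖ ≤ 1 := by rw [my_norm_transpose]; exact nU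
  have nVT : ‖Vᵀ‖ ≤ 1 := by rw [my_norm_transpose]; exact nV
  have nBT : ‖Bᵀ‖ ≤ 1 := by rw [my_norm_transpose]; exact nB
  -- the diagonal of singular values
  have hSig : diagonal σ = Uᵀ * (Bᵀ * Bstar) * V := by
    rw [hSVD]
    have : Uᵀ * (U * diagonal σ * Vᵀ) * V = diagonal σ := by
      rw [Matrix.mul_assoc U, ← Matrix.mul_assoc Uᵀ U, hU, one_mul, Matrix.mul_assoc, hV, mul_one]
    exact this.symm
  have hσ1 : ∀ i, σ i ≤ 1 := by
    intro i
    have h1 : |σ i| ≤ ‖diagonal σ‖ := diag_lower σ i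
    have a0 : ‖Uᵀ * (Bᵀ * Bstar) * V‖ ≤ ‖Uᵀ * (Bᵀ * Bstar)‖ * ‖V‖ := Matrix.l2_opNorm_mul _ _
    have a1 : ‖Uᵀ * (Bᵀ * Bstar)‖ ≤ ‖Uᵀ‖ * ‖Bᵀ * Bstar‖ := Matrix.l2_opNorm_mul _ _
    have a2 : ‖Bᵀ * Bstar‖ ≤ ‖Bᵀ‖ * ‖Bstar‖ := Matrix.l2_opNorm_mul _ _
    have h2 : ‖diagonal σ‖ ≤ 1 := by
      rw [hSig]
      nlinarith [norm_nonneg (Uᵀ * (Bᵀ * Bstar)), norm_nonneg V, norm_nonneg Uᵀ,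
        norm_nonneg (Bᵀ * Bstar), norm_nonneg Bᵀ, norm_nonneg Bstar]
    linarith [le_abs_self (σ i)]
  -- Claim 1: 1 - (B𝓡)ᵀ B* = V D1 Vᵀ
  have key : (B * (U * Vᵀ))ᵀ * Bstar = V * (diagonal σ * Vᵀ) := by
    rw [transpose_mul, transpose_mul, transpose_transpose]
    simp only [Matrix.mul_assoc]
    rw [hSVD]
    simp only [Matrix.mul_assoc]
    rw [← Matrix.mul_assoc Uᵀ U, hU, Matrix.one_mul]
  have hM1 : 1 - (B * (U * Vᵀ))ᵀ * Bstar = V * (D1 * Vᵀ) := by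
    have hsub : V * (D1 * Vᵀ) = V * Vᵀ - V * (diagonal σ * Vᵀ) := by
      have hd : D1 = 1 - diagonal σ := by
        rw [hD1def, ← diagonal_one, diagonal_sub]
      rw [hd, Matrix.sub_mul, one_mul, Matrix.mul_sub]
    rw [key, hsub, hVV]
  -- Claim 2: (B⊥ᵀ B)ᵀ (B⊥ᵀ B) = U D2 Uᵀ
  have hperp : Bperp * Bperpᵀ = 1 - Bstar * Bstarᵀ := eq_sub_of_add_eq' hspan
  have hBstarB : Bstarᵀ * B = V * (diagonal σ * Uᵀ) := by
    have h0 : Bstarᵀ * B = (Bᵀ * Bstar)ᵀ := by rw [transpose_mul, transpose_transpose]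
    rw [h0, hSVD, transpose_mul, transpose_mul, transpose_transpose, diagonal_transpose]
  have e1 : (Bperpᵀ * B)ᵀ * (Bperpᵀ * B) = Bᵀ * ((Bperp * Bperpᵀ) * B) := by
    rw [transpose_mul, transpose_transpose]
    simp only [Matrix.mul_assoc]
  have e2 : Bᵀ * ((Bperp * Bperpᵀ) * B) = 1 - (Bᵀ * Bstar) * (Bstarᵀ * B) := by
    rw [hperp, Matrix.sub_mul, Matrix.one_mul, Matrix.mul_sub, hB]
    simp only [Matrix.mul_assoc]
  have e3 : (Bᵀ * Bstar) * (Bstarᵀ * B) = U * (diagonal σ * (diagonal σ * Uᵀ)) := by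
    rw [hSVD, hBstarB]
    simp only [Matrix.mul_assoc]
    rw [← Matrix.mul_assoc Vᵀ V, hV, one_mul]
  have e4 : diagonal σ * (diagonal σ * Uᵀ) = (diagonal fun i => σ i * σ i) * Uᵀ := by
    rw [← Matrix.mul_assoc, diagonal_mul_diagonal]
  have e5 : (1 : Matrix (Fin r) (Fin r) ℝ) - U * ((diagonal fun i => σ i * σ i) * Uᵀ)
      = U * (D2 * Uᵀ) := by
    have hd : D2 = 1 - (diagonal fun i => σ i * σ i) := by
      rw [hD2def, ← diagonal_one, diagonal_sub]
    rw [hd, Matrix.sub_mul, one_mul, Matrix.mul_sub, hUU]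
  have hM2 : (Bperpᵀ * B)ᵀ * (Bperpᵀ * B) = U * (D2 * Uᵀ) := by
    rw [e1, e2, e3, e4, e5]
  -- finish
  have nD1 : ‖V * (D1 * Vᵀ)‖ ≤ ‖D1‖ := by
    have a0 : ‖V * (D1 * Vᵀ)‖ ≤ ‖V‖ * ‖D1 * Vᵀ‖ := Matrix.l2_opNorm_mul _ _
    have a1 : ‖D1 * Vᵀ‖ ≤ ‖D1‖ * ‖Vᵀ‖ := Matrix.l2_opNorm_mul _ _
    nlinarith [norm_nonneg (D1 * Vᵀ), norm_nonneg D1, norm_nonneg V, norm_nonneg Vᵀ]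
  have hD1D2 : ‖D1‖ ≤ ‖D2‖ := by
    refine diag_upper _ _ (norm_nonneg _) (fun i => ?_)
    calc |1 - σ i| = 1 - σ i := abs_of_nonneg (by linarith [hσ1 i])
      _ ≤ 1 - σ i * σ i := by nlinarith [hσ i, hσ1 i]
      _ = |1 - σ i * σ i| := (abs_of_nonneg (by nlinarith [hσ i, hσ1 i])).symm
      _ ≤ ‖D2‖ := by rw [hD2def]; exact diag_lower (fun j => 1 - σ j * σ j) i
  have hD2 : ‖D2‖ ≤ ‖Bperpᵀ * B‖ ^ 2 := by
    have hrec : Uᵀ * ((U * (D2 * Uᵀ)) * U) = D2 := by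
      rw [Matrix.mul_assoc U, ← Matrix.mul_assoc Uᵀ U, hU, one_mul, Matrix.mul_assoc, hU, mul_one]
    have a0 : ‖Uᵀ * ((U * (D2 * Uᵀ)) * U)‖ ≤ ‖Uᵀ‖ * ‖(U * (D2 * Uᵀ)) * U‖ :=
      Matrix.l2_opNorm_mul _ _
    have a1 : ‖(U * (D2 * Uᵀ)) * U‖ ≤ ‖U * (D2 * Uᵀ)‖ * ‖U‖ := Matrix.l2_opNorm_mul _ _
    have a2 : ‖D2‖ ≤ ‖U * (D2 * Uᵀ)‖ := by
      calc ‖D2‖ = ‖Uᵀ * (U * (D2 * Uᵀ) * U)‖ := (congrArg norm hrec).symm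
        _ ≤ ‖Uᵀ‖ * ‖U * (D2 * Uᵀ) * U‖ := Matrix.l2_opNorm_mul _ _
        _ ≤ ‖U * (D2 * Uᵀ)‖ := by
            nlinarith [norm_nonneg (U * (D2 * Uᵀ) * U), norm_nonneg (U * (D2 * Uᵀ)),
              norm_nonneg Uᵀ, norm_nonneg U]
    have a3 : ‖U * (D2 * Uᵀ)‖ = ‖Bperpᵀ * B‖ * ‖Bperpᵀ * B‖ := by
      rw [← hM2, my_norm_transpose_mul_self]
    rw [sq]
    linarith
  rw [hM1]
  linarith
end
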